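/- arXiv:1209.2852 — 5 statements merged into one kernel-verified Lean document; each statement's English description precedes it below -/
import Mathlib

section
/- Let t > 0 and let μ be the infinite product, over n ∈ ℕ, of the real Gaussian measures N(0, t); μ is a probability measure on ℝ^ℕ. Then the set {x ∈ ℝ^ℕ : the family (x_n²)_{n∈ℕ} is summable} has μ-measure 0. (Proposition 2.2: the Cameron–Martin Hilbert space ℓ² is contained in a null Borel set of the infinite-dimensional Gaussian measure.) -/
/-!
Every square-summable sequence eventually stays in `[-1, 1]`. Under `μ` the coordinates are
i.i.d. with law `N(0, t)`, and `p := N(0, t)([-1, 1]) < 1`, so the event that `k` given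
coordinates all lie in `[-1, 1]` has probability `p ^ k`. Letting `k → ∞`, each event
"`|x n| ≤ 1` for all `n ≥ N`" is null, and `ℓ²` is covered by countably many of them.
-/

open MeasureTheory ProbabilityTheory Filter Set
open scoped NNReal

lemma gaussianReal_lt_one_of_volume_compl_ne_zero (m : ℝ) {v : ℝ≥0} (hv : v ≠ 0)
    {s : Set ℝ} (hs : MeasurableSet s) (hsc : volume sᶜ ≠ 0) :
    gaussianReal m v s < 1 := by
  refine prob_le_one.lt_of_ne fun hs_one => hsc ?_
  exact gaussianReal_absolutelyContinuous' m hv ((prob_compl_eq_zero_iff hs).mpr hs_one)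

lemma gaussianReal_Icc_lt_one (m : ℝ) {v : ℝ≥0} (hv : v ≠ 0) (a b : ℝ) :
    gaussianReal m v (Icc a b) < 1 := by
  refine gaussianReal_lt_one_of_volume_compl_ne_zero m hv measurableSet_Icc fun h => ?_
  have h_Ioi : volume (Ioi b) = 0 :=
    measure_mono_null (fun x (hx : b < x) (hx' : x ∈ Icc a b) => hx.not_ge hx'.2) h
  simp [Real.volume_Ioi] at h_Ioi

section FiniteMarginals

variable {α : Type*} [MeasurableSpace α] {μ : Measure (ℕ → α)} {ν : Measure α} [SigmaFinite ν]

lemma measure_forall_mem_finset_eq_pow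
    (hμ : ∀ S : Finset ℕ, μ.map (fun x (i : S) => x i) = Measure.pi fun _ : S => ν)
    (S : Finset ℕ) {s : Set α} (hs : MeasurableSet s) :
    μ {x | ∀ i ∈ S, x i ∈ s} = ν s ^ S.card := by
  have h_eq : {x : ℕ → α | ∀ i ∈ S, x i ∈ s} =
      (fun x (i : S) => x i) ⁻¹' univ.pi fun _ => s := by
    ext x; simp
  rw [h_eq, ← Measure.map_apply (by fun_prop) (.univ_pi fun _ => hs), hμ S, Measure.pi_pi,
    Finset.prod_const, Finset.card_univ, Fintype.card_coe]

lemma measure_forall_ge_mem_eq_zero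
    (hμ : ∀ S : Finset ℕ, μ.map (fun x (i : S) => x i) = Measure.pi fun _ : S => ν)
    {s : Set α} (hs : MeasurableSet s) (hνs : ν s < 1) (N : ℕ) :
    μ {x | ∀ n, N ≤ n → x n ∈ s} = 0 := by
  have h_le_pow (k : ℕ) : μ {x | ∀ n, N ≤ n → x n ∈ s} ≤ ν s ^ k := by
    calc μ {x | ∀ n, N ≤ n → x n ∈ s}
        ≤ μ {x | ∀ i ∈ Finset.Ico N (N + k), x i ∈ s} :=
          measure_mono fun x hx i hi => hx i (Finset.mem_Ico.mp hi).1
      _ = ν s ^ k := by rw [measure_forall_mem_finset_eq_pow hμ _ hs, Nat.card_Ico,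
          Nat.add_sub_cancel_left]
  exact le_antisymm
    (ge_of_tendsto' (ENNReal.tendsto_pow_atTop_nhds_zero_of_lt_one hνs) h_le_pow) zero_le

end FiniteMarginals

lemma setOf_summable_sq_subset_iUnion_eventually_mem_Icc :
    {x : ℕ → ℝ | Summable fun n => x n ^ 2} ⊆ ⋃ N, {x | ∀ n, N ≤ n → x n ∈ Icc (-1) 1} := by
  intro x hx
  obtain ⟨N, hN⟩ := eventually_atTop.mp
    (hx.tendsto_atTop_zero.eventually_le_const zero_lt_one)
  exact mem_iUnion.mpr ⟨N, fun n hn => abs_le.mp ((sq_le_one_iff_abs_le_one _).mp (hN n hn))⟩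

theorem gaussian_product_measure_ell2_null_general
    (t : ℝ≥0) (ht : 0 < t) (μ : Measure (ℕ → ℝ))
    (hμ : ∀ S : Finset ℕ,
      μ.map (fun x (i : S) => x i) = Measure.pi fun _ : S => gaussianReal 0 t) :
    μ {x : ℕ → ℝ | Summable fun n => x n ^ 2} = 0 := by
  refine measure_mono_null setOf_summable_sq_subset_iUnion_eventually_mem_Icc
    (measure_iUnion_null fun N => ?_)
  exact measure_forall_ge_mem_eq_zero hμ measurableSet_Icc
    (gaussianReal_Icc_lt_one 0 ht.ne' (-1) 1) N

/-- **Proposition 2.2.**  Let `t > 0` and let `μ` be the infinite product, over `n ∈ ℕ`, of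
the real Gaussian measures `N(0, t)` — characterized here as a probability measure on
`ℝ^ℕ` all of whose finite-dimensional marginals are the corresponding finite Gaussian
product measures.  Then the set of `x ∈ ℝ^ℕ` such that `(x_n²)` is summable (i.e. the
Cameron–Martin space `ℓ²`) has `μ`-measure `0`. -/
theorem gaussian_product_measure_ell2_null
    (t : ℝ≥0) (ht : 0 < t) (μ : Measure (ℕ → ℝ)) [IsProbabilityMeasure μ]
    (hμ : ∀ S : Finset ℕ,
      μ.map (fun x (i : S) => x i) = Measure.pi fun _ : S => gaussianReal 0 t) :
    μ {x : ℕ → ℝ | Summable fun n => x n ^ 2} = 0 :=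
  gaussian_product_measure_ell2_null_general t ht μ hμ
end

section
/- Let Γ be a countable infinite set, t > 0, and b : Γ → (0, ∞). Assume that for every ε > 0 the family (∫_{ε b_j}^{∞} e^{−x²/2} dx)_{j∈Γ} is summable. Let μ be the infinite product, over j ∈ Γ, of the real Gaussian measures N(0, t), a probability measure on ℝ^Γ. Then the set B_b(Γ) = {x ∈ ℝ^Γ : the function j ↦ |x_j| / b_j tends to 0 along the cofinite filter on Γ} has μ-measure 1. (This is the content of Theorem 2.3: the Gaussian measure μ_{t} is carried by the Banach space B_b(Γ).) -/
open MeasureTheory ProbabilityTheory Filter Set Real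
open scoped NNReal ENNReal Topology

/-!
Every coordinate of `x ∼ μ` has law `N(0, t)`, so `μ {ε b_j ≤ |x_j|}` is at most a constant times
the Gaussian tail `∫_{ε b_j / √t}^∞ e^{-x²/2} dx`, which is summable in `j`. By Borel–Cantelli,
almost surely `|x_j| < ε b_j` for all but finitely many `j`; intersecting these events over
`ε = 1/(n+1)` gives `|x_j| / b_j → 0` almost surely.
-/

lemma map_eval_eq_of_map_restrict_eq_pi {ι : Type*} {X : ι → Type*}
    [∀ i, MeasurableSpace (X i)] {μ : Measure (∀ i, X i)} {ν : ∀ i, Measure (X i)}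
    [∀ i, IsProbabilityMeasure (ν i)]
    (h : ∀ S : Finset ι, μ.map (fun x (i : S) => x i) = Measure.pi fun i : S => ν i) (j : ι) :
    μ.map (fun x => x j) = ν j := by
  classical
  let j' : ({j} : Finset ι) := ⟨j, Finset.mem_singleton_self j⟩
  have hcomp : (fun x : ∀ i, X i => x j) =
      Function.eval j' ∘ fun (x : ∀ i, X i) (i : ({j} : Finset ι)) => x i := rfl
  rw [hcomp, ← Measure.map_map (measurable_pi_apply _) (by fun_prop), h,
    (measurePreserving_eval _ j').map_eq]

lemma gaussianReal_zero_one_Ici (c : ℝ) :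
    gaussianReal 0 1 (Ici c) =
      ENNReal.ofReal ((√(2 * π))⁻¹ * ∫ x in Ioi c, exp (-x ^ 2 / 2)) := by
  rw [gaussianReal_apply_eq_integral 0 one_ne_zero, integral_Ici_eq_integral_Ioi,
    ← integral_const_mul]
  simp [gaussianPDFReal]

lemma gaussianReal_setOf_le_abs_le_two_mul_Ici (v : ℝ≥0) (c : ℝ) :
    gaussianReal 0 v {y | c ≤ |y|} ≤ 2 * gaussianReal 0 v (Ici c) := by
  have hsymm : gaussianReal 0 v (Iic (-c)) = gaussianReal 0 v (Ici c) := by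
    conv_rhs => rw [← neg_zero, ← gaussianReal_map_neg]
    rw [Measure.map_apply measurable_neg measurableSet_Ici]
    congr 1
    ext y; simp
  have hsub : {y : ℝ | c ≤ |y|} ⊆ Iic (-c) ∪ Ici c := fun y (hy : c ≤ |y|) => le_abs'.mp hy
  calc gaussianReal 0 v {y | c ≤ |y|} ≤ gaussianReal 0 v (Iic (-c) ∪ Ici c) := measure_mono hsub
    _ ≤ gaussianReal 0 v (Iic (-c)) + gaussianReal 0 v (Ici c) := measure_union_le _ _
    _ = 2 * gaussianReal 0 v (Ici c) := by rw [hsymm, two_mul]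

lemma gaussianReal_setOf_le_abs_eq_div_sqrt {v : ℝ≥0} (hv : v ≠ 0) (c : ℝ) :
    gaussianReal 0 v {y | c ≤ |y|} = gaussianReal 0 1 {y | c / √v ≤ |y|} := by
  have hsv : 0 < √(v : ℝ) := Real.sqrt_pos.2 (by positivity)
  have hmap : (gaussianReal 0 1).map (√(v : ℝ) * ·) = gaussianReal 0 v := by
    rw [gaussianReal_map_const_mul, mul_zero, mul_one]
    congr 1
    exact NNReal.eq (Real.sq_sqrt v.2)
  rw [← hmap, Measure.map_apply (measurable_const_mul _)
    (measurableSet_le measurable_const measurable_abs)]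
  congr 1
  ext y
  simp [abs_mul, abs_of_pos hsv, div_le_iff₀ hsv, mul_comm]

lemma gaussianReal_setOf_le_abs_le_tail_integral {v : ℝ≥0} (hv : v ≠ 0) (c : ℝ) :
    gaussianReal 0 v {y | c ≤ |y|}
      ≤ ENNReal.ofReal (2 * (√(2 * π))⁻¹ * ∫ x in Ioi (c / √v), exp (-x ^ 2 / 2)) := by
  rw [gaussianReal_setOf_le_abs_eq_div_sqrt hv, mul_assoc, ENNReal.ofReal_mul zero_le_two,
    ENNReal.ofReal_ofNat, ← gaussianReal_zero_one_Ici]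
  exact gaussianReal_setOf_le_abs_le_two_mul_Ici 1 _

lemma ae_eventually_abs_lt_of_summable_tail {ι : Type*} [Countable ι] {μ : Measure (ι → ℝ)}
    {v : ℝ≥0} (hv : v ≠ 0) (hmarg : ∀ j, μ.map (fun x => x j) = gaussianReal 0 v) {c : ι → ℝ}
    (htail : Summable fun j => ∫ x in Ioi (c j / √v), exp (-x ^ 2 / 2)) :
    ∀ᵐ x ∂μ, ∀ᶠ j in cofinite, |x j| < c j := by
  have hmeas : ∀ j, μ {x | c j ≤ |x j|} = gaussianReal 0 v {y | c j ≤ |y|} := fun j => by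
    rw [← hmarg j, Measure.map_apply (measurable_pi_apply j)
      (measurableSet_le measurable_const measurable_abs)]
    rfl
  have hsum : ∑' j, μ {x | c j ≤ |x j|} ≠ ∞ := by
    refine ne_top_of_le_ne_top ?_ (ENNReal.tsum_le_tsum fun j =>
      (hmeas j).trans_le (gaussianReal_setOf_le_abs_le_tail_integral hv (c j)))
    rw [← ENNReal.ofReal_tsum_of_nonneg (fun j => by positivity) (htail.mul_left _)]
    exact ENNReal.ofReal_ne_top
  filter_upwards [ae_finite_setOfPred_mem hsum] with x hx
  simpa [eventually_cofinite] using hx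

lemma tendsto_abs_div_nhds_zero_of_eventually_lt {ι : Type*} {l : Filter ι} {f b : ι → ℝ}
    (hb : ∀ i, 0 < b i) (h : ∀ n : ℕ, ∀ᶠ i in l, |f i| < b i / (n + 1)) :
    Tendsto (fun i => |f i| / b i) l (𝓝 0) := by
  rw [Metric.tendsto_nhds]
  intro δ hδ
  obtain ⟨n, hn⟩ := exists_nat_one_div_lt hδ
  filter_upwards [h n] with i hi
  rw [Real.dist_eq, sub_zero, abs_of_nonneg (div_nonneg (abs_nonneg _) (hb i).le)]
  calc |f i| / b i < 1 / (n + 1) := by rwa [div_lt_iff₀ (hb i), one_div_mul_eq_div]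
    _ < δ := hn

theorem gaussian_product_measure_carried_by_Bb_general
    (Γ : Type*) [Countable Γ]
    (t : ℝ≥0) (ht : 0 < t) (b : Γ → ℝ) (hb : ∀ j, 0 < b j)
    (htail : ∀ ε : ℝ, 0 < ε →
      Summable fun j : Γ => ∫ x in Set.Ioi (ε * b j), Real.exp (-(x ^ 2) / 2))
    (μ : Measure (Γ → ℝ)) [IsProbabilityMeasure μ]
    (hμ : ∀ S : Finset Γ,
      μ.map (fun x (i : S) => x i) = Measure.pi fun _ : S => gaussianReal 0 t) :
    μ {x : Γ → ℝ | Tendsto (fun j => |x j| / b j) cofinite (nhds 0)} = 1 := by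
  have hmarg := map_eval_eq_of_map_restrict_eq_pi (ν := fun _ => gaussianReal 0 t) hμ
  have hsmall : ∀ᵐ x ∂μ, ∀ n : ℕ, ∀ᶠ j in cofinite, |x j| < b j / (n + 1) :=
    ae_all_iff.2 fun n => ae_eventually_abs_lt_of_summable_tail ht.ne' hmarg <| by
      convert htail ((n + 1 : ℝ)⁻¹ / √t) (by positivity) using 5 with j
      ring
  have hB : ∀ᵐ x ∂μ, x ∈ {x : Γ → ℝ | Tendsto (fun j => |x j| / b j) cofinite (nhds 0)} :=
    hsmall.mono fun x hx => tendsto_abs_div_nhds_zero_of_eventually_lt hb hx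
  exact (measure_congr (eventuallyEq_univ.2 hB)).trans measure_univ

/-- **Theorem 2.3** (the Gaussian measure is carried by the Banach space `B_b(Γ)`).
Let `Γ` be a countable infinite set, `t > 0` and `b : Γ → (0, ∞)` such that for every
`ε > 0` the family of Gaussian tails `(∫_{ε b_j}^∞ e^{−x²/2} dx)_{j∈Γ}` is summable.
Let `μ` be the infinite product over `j ∈ Γ` of the Gaussian measures `N(0, t)` —
characterized as a probability measure on `ℝ^Γ` whose finite-dimensional marginals are
the corresponding finite Gaussian product measures.  Then the set
`B_b(Γ) = {x : |x_j|/b_j → 0 along the cofinite filter}` has `μ`-measure `1`. -/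
theorem gaussian_product_measure_carried_by_Bb
    (Γ : Type*) [Countable Γ] [Infinite Γ]
    (t : ℝ≥0) (ht : 0 < t) (b : Γ → ℝ) (hb : ∀ j, 0 < b j)
    (htail : ∀ ε : ℝ, 0 < ε →
      Summable fun j : Γ => ∫ x in Set.Ioi (ε * b j), Real.exp (-(x ^ 2) / 2))
    (μ : Measure (Γ → ℝ)) [IsProbabilityMeasure μ]
    (hμ : ∀ S : Finset Γ,
      μ.map (fun x (i : S) => x i) = Measure.pi fun _ : S => gaussianReal 0 t) :
    μ {x : Γ → ℝ | Tendsto (fun j => |x j| / b j) cofinite (nhds 0)} = 1 :=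
  gaussian_product_measure_carried_by_Bb_general Γ t ht b hb htail μ hμ
end

section
/- Let E be a countable set, h > 0, and a ∈ ℓ²(E, ℂ). For each n the function E_{a,F_n}(x) = exp(ℓ_{a,F_n}(x)) belongs to L²(ℝ^E, μ_{E,h}^K), the sequence (E_{a,F_n})_{n≥0} is a Cauchy sequence in L²(μ_{E,h}^K), its limit E_a does not depend on the chosen exhausting sequence, and ‖E_a‖²_{L²(μ_{E,h}^K)} = exp(h Σ_{j∈E} (Re a_j)²). (Theorem 2.6, exponential part.) -/
open MeasureTheory ProbabilityTheory Filter
open scoped NNReal ENNReal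

/-- `ℓ_{a,S}(x) = ∑_{j∈S} a_j x_j`. -/
noncomputable def ellSum {E : Type*} (a : E → ℂ) (S : Finset E) (x : E → ℝ) : ℂ :=
  ∑ j ∈ S, a j * (x j : ℂ)

/-! Under `μ` the coordinates indexed by a finite `S` are independent `N(0, v)` variables, `v = h/2`,
so `∫ exp (ℓ_{c,S}) dμ = exp (v/2 · ∑_{j∈S} c_j²)` for every complex `c`. Since
`conj (E_{a,S}) · E_{a,T}` is again such an exponential, the Gram matrix
`⟪E_{a,S}, E_{a,T}⟫ = exp (v/2 · (∑_S ā_j² + ∑_T a_j² + 2 ∑_{S∩T} |a_j|²))` converges as `S` and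
`T` grow, because `a ∈ ℓ²`. A net whose Gram matrix converges is Cauchy, so `S ↦ E_{a,S}` converges
in `L²` along the finite subsets of `E`; every exhausting sequence follows this net, and the squared
norm of the limit is `lim_S ‖E_{a,S}‖² = lim_S exp (2v ∑_S (Re a_j)²)`. -/

open Complex
open scoped ComplexConjugate Topology InnerProductSpace

section Gaussian

variable {ι : Type*} [Fintype ι] (m : ℝ) (v : ℝ≥0)

lemma integrable_cexp_mul_gaussianReal (z : ℂ) :
    Integrable (fun t : ℝ => cexp (z * t)) (gaussianReal m v) :=
  integrable_cexp_mul_of_re_mem_integrableExpSet (X := id) aemeasurable_id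
    (by simp [integrableExpSet_id_gaussianReal])

lemma integrable_cexp_sum_mul_pi_gaussianReal (c : ι → ℂ) :
    Integrable (fun y : ι → ℝ => cexp (∑ i, c i * y i))
      (Measure.pi fun _ => gaussianReal m v) := by
  simp_rw [Complex.exp_sum]
  exact Integrable.fintype_prod fun i => integrable_cexp_mul_gaussianReal m v (c i)

lemma integral_cexp_sum_mul_pi_gaussianReal (c : ι → ℂ) :
    ∫ y : ι → ℝ, cexp (∑ i, c i * y i) ∂(Measure.pi fun _ => gaussianReal m v) =
      cexp (∑ i, (c i * m + v * c i ^ 2 / 2)) := by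
  simp_rw [Complex.exp_sum, integral_fintype_prod_eq_prod (fun i (t : ℝ) => cexp (c i * t))]
  exact Finset.prod_congr rfl fun i _ => complexMGF_id_gaussianReal (c i)

end Gaussian

lemma MeasureTheory.L2.inner_toLp_toLp {α 𝕜 : Type*} [RCLike 𝕜] {m : MeasurableSpace α}
    {μ : Measure α} {f g : α → 𝕜} (hf : MemLp f 2 μ) (hg : MemLp g 2 μ) :
    ⟪hf.toLp f, hg.toLp g⟫_𝕜 = ∫ x, conj (f x) * g x ∂μ := by
  rw [L2.inner_def]
  refine integral_congr_ae ?_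
  filter_upwards [hf.coeFn_toLp, hg.coeFn_toLp] with x hfx hgx
  rw [hfx, hgx, RCLike.inner_apply, mul_comm]

lemma cauchySeq_of_tendsto_inner {𝕜 H β : Type*} [RCLike 𝕜] [NormedAddCommGroup H]
    [InnerProductSpace 𝕜 H] [Nonempty β] [SemilatticeSup β] {u : β → H} {g : 𝕜}
    (hu : Tendsto (fun p : β × β => ⟪u p.1, u p.2⟫_𝕜) atTop (𝓝 g)) : CauchySeq u := by
  rw [← prod_atTop_atTop_eq] at hu
  have hdiag (f : β × β → β) (hf : Tendsto f (atTop ×ˢ atTop) atTop) :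
      Tendsto (fun p => ‖u (f p)‖ ^ 2) (atTop ×ˢ atTop) (𝓝 (RCLike.re g)) := by
    simp_rw [← inner_self_eq_norm_sq (𝕜 := 𝕜)]
    exact (RCLike.continuous_re.tendsto g).comp (hu.comp (hf.prodMk hf))
  have hsq : Tendsto (fun p : β × β => ‖u p.1 - u p.2‖ ^ 2) (atTop ×ˢ atTop) (𝓝 0) := by
    have := ((hdiag _ tendsto_fst).sub
      (((RCLike.continuous_re.tendsto g).comp hu).const_mul 2)).add (hdiag _ tendsto_snd)
    rw [show RCLike.re g - 2 * RCLike.re g + RCLike.re g = 0 by ring] at this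
    exact this.congr fun p => (norm_sub_sq (𝕜 := 𝕜) _ _).symm
  rw [cauchySeq_iff_tendsto_dist_atTop_0, ← prod_atTop_atTop_eq]
  simpa [Function.comp_def, dist_eq_norm, Real.sqrt_sq (norm_nonneg _)] using
    (Real.continuous_sqrt.tendsto 0).comp hsq

lemma Memℓp.summable_norm_sq {α F : Type*} [NormedAddCommGroup F] {a : α → F}
    (ha : Memℓp a 2) : Summable fun j => ‖a j‖ ^ 2 := by
  simpa using ha.summable (by norm_num)

lemma Finset.sum_union_indicator_add_sq {E R : Type*} [DecidableEq E] [CommSemiring R]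
    (c d : E → R) (S T : Finset E) :
    ∑ j ∈ S ∪ T, ((S : Set E).indicator c j + (T : Set E).indicator d j) ^ 2 =
      ∑ j ∈ S, c j ^ 2 + ∑ j ∈ T, d j ^ 2 + 2 * ∑ j ∈ S ∩ T, c j * d j := by
  have hsq (U : Finset E) (f : E → R) (j : E) :
      (U : Set E).indicator f j ^ 2 = (U : Set E).indicator (fun j => f j ^ 2) j := by
    by_cases hj : j ∈ U <;> simp [hj]
  simp_rw [add_sq, Finset.sum_add_distrib, hsq, mul_assoc, ← Finset.mul_sum,
    ← Set.inter_indicator_mul, ← Finset.coe_inter,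
    Finset.sum_indicator_subset _ Finset.subset_union_left,
    Finset.sum_indicator_subset _ Finset.subset_union_right,
    Finset.sum_indicator_subset _ (Finset.inter_subset_left.trans Finset.subset_union_left)]
  ring

lemma norm_cexp_sq (z : ℂ) : ‖cexp z‖ ^ 2 = ‖cexp (2 * z)‖ := by
  rw [← norm_pow, ← Complex.exp_nat_mul]; norm_num

def HasGaussianMarginals {E : Type*} (μ : Measure (E → ℝ)) (v : ℝ≥0) : Prop :=
  ∀ S : Finset E, μ.map (fun x (i : S) => x i) = Measure.pi fun _ : S => gaussianReal 0 v

section EllSum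

variable {E : Type*}

@[fun_prop]
lemma measurable_ellSum (c : E → ℂ) (S : Finset E) : Measurable (ellSum c S) := by
  unfold ellSum; fun_prop

lemma ellSum_eq_sum_coe (c : E → ℂ) (S : Finset E) (x : E → ℝ) :
    ellSum c S x = ∑ i : S, c i * x i :=
  (Finset.sum_coe_sort S fun j => c j * x j).symm

lemma conj_ellSum (c : E → ℂ) (S : Finset E) (x : E → ℝ) :
    conj (ellSum c S x) = ellSum (fun j => conj (c j)) S x := by
  simp [ellSum, map_sum]

lemma ellSum_eq_ellSum_indicator (c : E → ℂ) {S U : Finset E} (hSU : S ⊆ U) (x : E → ℝ) :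
    ellSum c S x = ellSum ((S : Set E).indicator c) U x := by
  simp_rw [ellSum, ← Set.indicator_mul_const]
  exact (Finset.sum_indicator_subset _ hSU).symm

lemma ellSum_add (c d : E → ℂ) (S : Finset E) (x : E → ℝ) :
    ellSum (c + d) S x = ellSum c S x + ellSum d S x := by
  simp [ellSum, add_mul, Finset.sum_add_distrib]

end EllSum

namespace HasGaussianMarginals

variable {E : Type*} {μ : Measure (E → ℝ)} {v : ℝ≥0}

lemma measurePreserving_restrict (hμ : HasGaussianMarginals μ v) (S : Finset E) :
    MeasurePreserving (fun (x : E → ℝ) (i : S) => x i) μ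
      (Measure.pi fun _ : S => gaussianReal 0 v) :=
  ⟨by fun_prop, hμ S⟩

lemma integrable_cexp_ellSum (hμ : HasGaussianMarginals μ v) (c : E → ℂ) (S : Finset E) :
    Integrable (fun x => cexp (ellSum c S x)) μ := by
  simp_rw [ellSum_eq_sum_coe]
  exact ((hμ.measurePreserving_restrict S).integrable_comp
    (by fun_prop : Measurable fun y : S → ℝ => cexp (∑ i : S, c i * y i)).aestronglyMeasurable).mpr
    (integrable_cexp_sum_mul_pi_gaussianReal 0 v _)

lemma integral_cexp_ellSum (hμ : HasGaussianMarginals μ v) (c : E → ℂ) (S : Finset E) :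
    ∫ x, cexp (ellSum c S x) ∂μ = cexp (v / 2 * ∑ j ∈ S, c j ^ 2) := by
  have hg : Measurable fun y : S → ℝ => cexp (∑ i : S, c i * y i) := by fun_prop
  simp_rw [ellSum_eq_sum_coe]
  rw [← integral_map (hμ.measurePreserving_restrict S).aemeasurable hg.aestronglyMeasurable,
    hμ S, integral_cexp_sum_mul_pi_gaussianReal, Finset.mul_sum, ← Finset.sum_coe_sort S]
  simp only [Complex.ofReal_zero, mul_zero, zero_add]
  congr 1
  exact Finset.sum_congr rfl fun j _ => by ring

lemma memLp_cexp_ellSum (hμ : HasGaussianMarginals μ v) (a : E → ℂ) (S : Finset E) :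
    MemLp (fun x => cexp (ellSum a S x)) 2 μ := by
  rw [memLp_two_iff_integrable_sq_norm (by fun_prop)]
  have hsq (x : E → ℝ) : ‖cexp (ellSum a S x)‖ ^ 2 = ‖cexp (ellSum (fun j => 2 * a j) S x)‖ := by
    rw [norm_cexp_sq, ellSum, ellSum, Finset.mul_sum]
    simp_rw [mul_assoc]
  simp_rw [hsq]
  exact (hμ.integrable_cexp_ellSum _ S).norm

lemma integral_conj_mul_cexp_ellSum [DecidableEq E] (hμ : HasGaussianMarginals μ v)
    (a : E → ℂ) (S T : Finset E) :
    ∫ x, conj (cexp (ellSum a S x)) * cexp (ellSum a T x) ∂μ =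
      cexp (v / 2 * (∑ j ∈ S, conj (a j) ^ 2 + ∑ j ∈ T, a j ^ 2 +
        2 * ∑ j ∈ S ∩ T, conj (a j) * a j)) := by
  have hprod (x : E → ℝ) : conj (cexp (ellSum a S x)) * cexp (ellSum a T x) =
      cexp (ellSum ((S : Set E).indicator (fun j => conj (a j)) + (T : Set E).indicator a)
        (S ∪ T) x) := by
    rw [← Complex.exp_conj, ← Complex.exp_add, conj_ellSum,
      ellSum_eq_ellSum_indicator _ Finset.subset_union_left,
      ellSum_eq_ellSum_indicator a Finset.subset_union_right, ellSum_add]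
  simp_rw [hprod, hμ.integral_cexp_ellSum, Pi.add_apply, Finset.sum_union_indicator_add_sq]

noncomputable def expEllL2 (hμ : HasGaussianMarginals μ v) (a : E → ℂ) (S : Finset E) :
    Lp ℂ 2 μ :=
  (hμ.memLp_cexp_ellSum a S).toLp _

lemma inner_expEllL2 [DecidableEq E] (hμ : HasGaussianMarginals μ v) (a : E → ℂ)
    (S T : Finset E) :
    ⟪hμ.expEllL2 a S, hμ.expEllL2 a T⟫_ℂ =
      cexp (v / 2 * (∑ j ∈ S, conj (a j) ^ 2 + ∑ j ∈ T, a j ^ 2 +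
        2 * ∑ j ∈ S ∩ T, conj (a j) * a j)) := by
  rw [expEllL2, expEllL2, L2.inner_toLp_toLp, hμ.integral_conj_mul_cexp_ellSum]

lemma norm_expEllL2_sq (hμ : HasGaussianMarginals μ v) (a : E → ℂ) (S : Finset E) :
    ‖hμ.expEllL2 a S‖ ^ 2 = Real.exp (2 * v * ∑ j ∈ S, (a j).re ^ 2) := by
  classical
  have hsum : v / 2 * (∑ j ∈ S, conj (a j) ^ 2 + ∑ j ∈ S, a j ^ 2 +
      2 * ∑ j ∈ S ∩ S, conj (a j) * a j) = ((2 * v * ∑ j ∈ S, (a j).re ^ 2 : ℝ) : ℂ) := by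
    rw [Finset.inter_self, Finset.mul_sum, ← Finset.sum_add_distrib, ← Finset.sum_add_distrib]
    push_cast
    rw [Finset.mul_sum, Finset.mul_sum]
    refine Finset.sum_congr rfl fun j _ => ?_
    have h := Complex.add_conj (a j)
    push_cast at h
    linear_combination ((v : ℂ) / 2 * (a j + conj (a j) + 2 * (a j).re)) * h
  rw [← inner_self_eq_norm_sq (𝕜 := ℂ), inner_expEllL2, hsum, ← Complex.ofReal_exp,
    RCLike.re_to_complex, Complex.ofReal_re]

lemma tendsto_inner_expEllL2 [DecidableEq E] (hμ : HasGaussianMarginals μ v) {a : E → ℂ}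
    (ha : Memℓp a 2) :
    Tendsto (fun p : Finset E × Finset E => ⟪hμ.expEllL2 a p.1, hμ.expEllL2 a p.2⟫_ℂ)
      atTop (𝓝 (cexp (v / 2 * (∑' j, conj (a j) ^ 2 + ∑' j, a j ^ 2 +
        2 * ∑' j, conj (a j) * a j)))) := by
  have hs := ha.summable_norm_sq
  have hconj : Summable fun j => conj (a j) ^ 2 := .of_norm (by simpa [sq] using hs)
  have hsq : Summable fun j => a j ^ 2 := .of_norm (by simpa [sq] using hs)
  have hmul : Summable fun j => conj (a j) * a j := .of_norm (by simpa [sq] using hs)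
  rw [← prod_atTop_atTop_eq]
  simp_rw [inner_expEllL2]
  exact (Complex.continuous_exp.tendsto _).comp
    ((((hconj.hasSum.comp tendsto_fst).add (hsq.hasSum.comp tendsto_snd)).add
      ((hmul.hasSum.comp (tendsto_inf_atTop _ tendsto_fst tendsto_snd)).const_mul 2)).const_mul _)

lemma norm_sq_of_tendsto_expEllL2 (hμ : HasGaussianMarginals μ v) {a : E → ℂ}
    (ha : Memℓp a 2) {L : Lp ℂ 2 μ} (hL : Tendsto (hμ.expEllL2 a) atTop (𝓝 L)) :
    ‖L‖ ^ 2 = Real.exp (2 * v * ∑' j, (a j).re ^ 2) := by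
  have hre : Summable fun j => (a j).re ^ 2 :=
    ha.summable_norm_sq.of_nonneg_of_le (fun j => sq_nonneg _)
      fun j => (sq (a j).re).trans_le
        ((Complex.re_sq_le_normSq _).trans_eq (Complex.normSq_eq_norm_sq _))
  refine tendsto_nhds_unique (hL.norm.pow 2) ?_
  simp_rw [norm_expEllL2_sq]
  exact (by fun_prop : Continuous fun t => Real.exp (2 * v * t)).tendsto _ |>.comp hre.hasSum

end HasGaussianMarginals

theorem exp_ell_a_L2_limit_general
    (E : Type*) (h : ℝ) (hh : 0 < h)
    (μ : Measure (E → ℝ))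
    (hμ : ∀ S : Finset E,
      μ.map (fun x (i : S) => x i) =
        Measure.pi fun _ : S => gaussianReal 0 (h / 2).toNNReal)
    (a : E → ℂ) (ha : Memℓp a 2)
    (F : ℕ → Finset E) (hFmono : Monotone F) (hFexh : ∀ j : E, ∃ n, j ∈ F n) :
    (∀ n, MemLp (fun x => Complex.exp (ellSum a (F n) x)) 2 μ) ∧
    (∀ δ : ℝ≥0∞, 0 < δ → ∃ N, ∀ m ≥ N, ∀ n ≥ N,
        eLpNorm (fun x => Complex.exp (ellSum a (F m) x) -
          Complex.exp (ellSum a (F n) x)) 2 μ < δ) ∧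
    ∃ Ea : (E → ℝ) → ℂ, MemLp Ea 2 μ ∧
      (∀ F' : ℕ → Finset E, Monotone F' → (∀ j : E, ∃ n, j ∈ F' n) →
        Tendsto (fun n => eLpNorm
            (fun x => Complex.exp (ellSum a (F' n) x) - Ea x) 2 μ)
          atTop (nhds 0)) ∧
      eLpNorm Ea 2 μ ^ 2 =
        ENNReal.ofReal (Real.exp (h * ∑' j : E, (a j).re ^ 2)) := by
  classical
  have hG : HasGaussianMarginals μ (h / 2).toNNReal := hμ
  obtain ⟨L, hL⟩ := cauchySeq_tendsto_of_complete
    (cauchySeq_of_tendsto_inner (hG.tendsto_inner_expEllL2 ha))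
  have hseq (F' : ℕ → Finset E) (hmono : Monotone F') (hexh : ∀ j, ∃ n, j ∈ F' n) :
      Tendsto (hG.expEllL2 a ∘ F') atTop (𝓝 L) :=
    hL.comp (tendsto_atTop_finset_of_monotone hmono hexh)
  refine ⟨fun n => hG.memLp_cexp_ellSum a (F n), fun δ hδ => ?_, L, Lp.memLp L,
    fun F' hmono hexh => ?_, ?_⟩
  · obtain ⟨N, hN⟩ := EMetric.cauchySeq_iff.mp (hseq F hFmono hFexh).cauchySeq δ hδ
    exact ⟨N, fun m hm n hn => (Lp.edist_toLp_toLp _ _ (hG.memLp_cexp_ellSum a (F m))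
      (hG.memLp_cexp_ellSum a (F n))).symm.trans_lt (hN m hm n hn)⟩
  · refine (tendsto_iff_edist_tendsto_0.mp (hseq F' hmono hexh)).congr fun n => ?_
    exact (congrArg (edist _) (Lp.toLp_coeFn L (Lp.memLp L))).symm.trans
      (Lp.edist_toLp_toLp _ _ (hG.memLp_cexp_ellSum a (F' n)) _)
  · rw [← Lp.enorm_def, ← ofReal_norm, ← ENNReal.ofReal_pow (norm_nonneg _),
      hG.norm_sq_of_tendsto_expEllL2 ha hL, Real.coe_toNNReal _ (by positivity)]
    congr 3
    ring

/-- **Theorem 2.6, exponential part.**  Let `E` be countable, `h > 0`, `a ∈ ℓ²(E, ℂ)` and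
let `μ = μ_{E,h}^K` be the product over `E` of the Gaussian measures `N(0, h/2)`
(characterized by its finite-dimensional marginals).  If `(F_n)` is an increasing
exhausting sequence of finite subsets of `E`, then each `E_{a,F_n} = exp(ℓ_{a,F_n})`
belongs to `L²(μ)`, the sequence `(E_{a,F_n})` is Cauchy in `L²(μ)`, its limit `E_a` does
not depend on the chosen exhausting sequence, and
`‖E_a‖²_{L²} = exp(h ∑_{j∈E} (Re a_j)²)`. -/
theorem exp_ell_a_L2_limit
    (E : Type*) [Countable E] (h : ℝ) (hh : 0 < h)
    (μ : Measure (E → ℝ)) [IsProbabilityMeasure μ]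
    (hμ : ∀ S : Finset E,
      μ.map (fun x (i : S) => x i) =
        Measure.pi fun _ : S => gaussianReal 0 (h / 2).toNNReal)
    (a : E → ℂ) (ha : Memℓp a 2)
    (F : ℕ → Finset E) (hFmono : Monotone F) (hFexh : ∀ j : E, ∃ n, j ∈ F n) :
    (∀ n, MemLp (fun x => Complex.exp (ellSum a (F n) x)) 2 μ) ∧
    (∀ δ : ℝ≥0∞, 0 < δ → ∃ N, ∀ m ≥ N, ∀ n ≥ N,
        eLpNorm (fun x => Complex.exp (ellSum a (F m) x) -
          Complex.exp (ellSum a (F n) x)) 2 μ < δ) ∧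
    ∃ Ea : (E → ℝ) → ℂ, MemLp Ea 2 μ ∧
      (∀ F' : ℕ → Finset E, Monotone F' → (∀ j : E, ∃ n, j ∈ F' n) →
        Tendsto (fun n => eLpNorm
            (fun x => Complex.exp (ellSum a (F' n) x) - Ea x) 2 μ)
          atTop (nhds 0)) ∧
      eLpNorm Ea 2 μ ^ 2 =
        ENNReal.ofReal (Real.exp (h * ∑' j : E, (a j).re ^ 2)) :=
  exp_ell_a_L2_limit_general E h hh μ hμ a ha F hFmono hFexh
end

section
/- For every natural number m and all complex numbers x and ξ, (x − iξ)^m = Σ_{p=0}^{m} binom(m, p) · (−i)^{m−p} · H_p(x) · H_{m−p}(ξ), where H_n is the monic probabilists' Hermite polynomial evaluated at the given complex argument. (Hermite identity (used to prove equation (4.17)).) -/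
open Polynomial Finset Complex

private lemma derivHermite (n : ℕ) :
    derivative (hermite n) = (n : ℤ[X]) * hermite (n - 1) := by
  induction n with
  | zero => simp
  | succ k ih =>
    rw [hermite_succ, derivative_sub, derivative_mul, derivative_X, one_mul, ih]
    cases k with
    | zero => simp
    | succ j =>
      simp only [Nat.add_sub_cancel] at ih ⊢
      rw [derivative_mul, derivative_natCast, zero_mul, zero_add, hermite_succ j]
      push_cast
      ring

private lemma aevalHermiteSucc (z : ℂ) (p : ℕ) :
    Polynomial.aeval z (hermite (p + 1)) =
      z * Polynomial.aeval z (hermite p) - (p : ℂ) * Polynomial.aeval z (hermite (p - 1)) := by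
  rw [hermite_succ, derivHermite]
  simp


private lemma key (a b : ℕ → ℂ) (x y : ℂ) (ha0 : a 0 = 1) (hb0 : b 0 = 1)
    (ha : ∀ p, a (p + 1) = x * a p - p * a (p - 1))
    (hb : ∀ p, b (p + 1) = y * b p - p * b (p - 1)) (m : ℕ) :
    (x - I * y) ^ m =
      ∑ p ∈ range (m + 1), (m.choose p : ℂ) * (-I) ^ (m - p) * a p * b (m - p) := by
  induction m with
  | zero => simp [ha0, hb0]
  | succ m ih =>
    -- the correction sum vanishes
    have hc : ∑ p ∈ range (m + 1),
        ((m.choose p : ℂ) * (-I) ^ (m - p) * ((p : ℂ) * a (p - 1) * b (m - p))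
          + (m.choose p : ℂ) * (-I) ^ (m - p) * (-I) * (((m - p : ℕ) : ℂ) * a p * b (m - p - 1))) = 0 := by
      rw [Finset.sum_add_distrib, Finset.sum_range_succ' _ m, Finset.sum_range_succ _ m]
      simp only [Nat.cast_zero, zero_mul, mul_zero, zero_add, Nat.sub_self, add_zero]
      rw [← Finset.sum_add_distrib]
      refine Finset.sum_eq_zero fun p hp => ?_
      rw [Finset.mem_range] at hp
      have hq : m - p = (m - (p + 1)) + 1 := by omega
      have hq2 : m - p - 1 = m - (p + 1) := by omega
      have hch : ((m.choose (p + 1) : ℕ) : ℂ) * ((p : ℂ) + 1)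
          = ((m.choose p : ℕ) : ℂ) * (((m - p : ℕ) : ℂ)) := by
        have := Nat.choose_succ_right_eq m p
        exact_mod_cast congrArg (Nat.cast (R := ℂ)) this
      rw [hq] at hch
      push_cast at hch
      simp only [Nat.succ_sub_succ, Nat.sub_zero]
      rw [hq]
      simp only [Nat.add_sub_cancel, Nat.sub_zero]
      rw [pow_succ]
      set t := (-I) ^ (m - (p + 1))
      push_cast
      linear_combination (t * a p * b (m - (p + 1))) * hch
        + ((m.choose p : ℂ) * (((m - (p + 1) : ℕ) : ℂ) + 1) * a p * b (m - (p + 1)) * t) * Complex.I_sq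
    rw [pow_succ, ih]
    calc (∑ p ∈ range (m + 1), (m.choose p : ℂ) * (-I) ^ (m - p) * a p * b (m - p)) * (x - I * y)
        = ∑ p ∈ range (m + 1),
            (((m.choose p : ℂ) * (-I) ^ (m - p) * a (p + 1) * b (m - p)
              + (m.choose p : ℂ) * (-I) ^ (m - p) * (-I) * (a p * b ((m - p) + 1)))
             + ((m.choose p : ℂ) * (-I) ^ (m - p) * ((p : ℂ) * a (p - 1) * b (m - p))
              + (m.choose p : ℂ) * (-I) ^ (m - p) * (-I) * (((m - p : ℕ) : ℂ) * a p * b (m - p - 1)))) := by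
          rw [Finset.sum_mul]
          refine Finset.sum_congr rfl fun p hp => ?_
          rw [ha p, hb (m - p)]
          ring
      _ = ∑ p ∈ range (m + 1),
            ((m.choose p : ℂ) * (-I) ^ (m - p) * a (p + 1) * b (m - p)
              + (m.choose p : ℂ) * (-I) ^ (m + 1 - p) * a p * b (m + 1 - p)) := by
          rw [Finset.sum_add_distrib, hc, add_zero]
          refine Finset.sum_congr rfl fun p hp => ?_
          rw [Finset.mem_range] at hp
          rw [show m + 1 - p = (m - p) + 1 by omega, pow_succ]
          ring
      _ = (∑ p ∈ range (m + 1), (m.choose p : ℂ) * (-I) ^ (m - p) * a (p + 1) * b (m - p))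
            + ∑ p ∈ range (m + 2), (m.choose p : ℂ) * (-I) ^ (m + 1 - p) * a p * b (m + 1 - p) := by
          rw [Finset.sum_add_distrib, Finset.sum_range_succ _ (m + 1), Nat.choose_succ_self]
          simp
      _ = (∑ p ∈ range (m + 1), (m.choose p : ℂ) * (-I) ^ (m - p) * a (p + 1) * b (m - p))
            + ((∑ p ∈ range (m + 1), (m.choose (p + 1) : ℂ) * (-I) ^ (m - p) * a (p + 1) * b (m - p))
              + (m.choose 0 : ℂ) * (-I) ^ (m + 1) * a 0 * b (m + 1)) := by
          rw [Finset.sum_range_succ' _ (m + 1)]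
          simp only [Nat.succ_sub_succ, Nat.sub_zero]
      _ = (∑ p ∈ range (m + 1), ((m + 1).choose (p + 1) : ℂ) * (-I) ^ (m - p) * a (p + 1) * b (m - p))
            + ((m + 1).choose 0 : ℂ) * (-I) ^ (m + 1 - 0) * a 0 * b (m + 1 - 0) := by
          rw [← add_assoc, ← Finset.sum_add_distrib]
          simp only [Nat.choose_zero_right, Nat.sub_zero]
          congr 1
          refine Finset.sum_congr rfl fun p hp => ?_
          rw [Nat.choose_succ_succ]
          push_cast
          ring
      _ = ∑ p ∈ range (m + 2), ((m + 1).choose p : ℂ) * (-I) ^ (m + 1 - p) * a p * b (m + 1 - p) := by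
          rw [Finset.sum_range_succ' _ (m + 1)]
          simp only [Nat.succ_sub_succ]

/-- **Hermite identity** (used to prove equation (4.17)): for every `m : ℕ` and all
complex `x, ξ`,
`(x − iξ)^m = ∑_{p=0}^m binom(m,p) (−i)^{m−p} H_p(x) H_{m−p}(ξ)`,
where `H_n` is the monic probabilists' Hermite polynomial. -/
theorem sub_I_mul_pow_eq_hermite_sum (m : ℕ) (x ξ : ℂ) :
    (x - Complex.I * ξ) ^ m =
      ∑ p ∈ Finset.range (m + 1),
        (Nat.choose m p : ℂ) * (-Complex.I) ^ (m - p) *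
          Polynomial.aeval x (Polynomial.hermite p) *
          Polynomial.aeval ξ (Polynomial.hermite (m - p)) := by
  exact key (fun p => Polynomial.aeval x (Polynomial.hermite p))
    (fun q => Polynomial.aeval ξ (Polynomial.hermite q)) x ξ
    (by simp) (by simp) (fun p => aevalHermiteSucc x p) (fun p => aevalHermiteSucc ξ p) m
end

section
/- Let E be a finite set and 0 < h ≤ 1. Let F : ℝ^E × ℝ^E → ℂ be bounded and continuous, and suppose that for every (α, β) ∈ I_2(E) the partial derivative ∂_z^α ∂_ζ^β F exists, is continuous and bounded. Then sup_{(α,β)∈I_2(E)} h^{(|α|+|β|)/2} ‖∂_z^α ∂_ζ^β (T_h(E)F)‖_{L^∞} ≤ 2^{|E|} · sup_{(α,β)∈Ĩ_2(E)} h^{(|α|+|β|)/2} ‖∂_z^α ∂_ζ^β F‖_{L^∞}, where Ĩ_2(E) is the set of (α, β) ∈ I_2(E) such that α_j + β_j ≥ 1 for every j ∈ E. (Proposition 8.4, estimate (8.6).) -/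
/-!
Derivatives commute with the heat operators, so `∂_z^α ∂_ζ^β T_h(E)F = T_h(E) ∂_z^α ∂_ζ^β F`.
Each factor `I - e^{(h/4)Δ_j}` has norm at most `2` on bounded functions. Moreover the Gaussian
mean of `|u| + |v|` is of order `√h`, so by the mean value theorem
`‖(I - e^{(h/4)Δ_j})G‖ ≤ 2√h max(‖∂_{z_j}G‖, ‖∂_{ζ_j}G‖)`. Applying the factors one at a time,
every direction `j` in which `(α, β)` carries no derivative is traded for one, and the factor `√h`
gained is exactly what the weight `h^{(|α|+|β|)/2}` demands; at the end `(α, β) ∈ Ĩ_2(E)`.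
-/

open MeasureTheory Real

/-- Partial derivative in the `j`-th `z`-coordinate. -/
noncomputable def pdZ {E : Type*} [Fintype E] [DecidableEq E] (j : E)
    (G : ((E → ℝ) × (E → ℝ)) → ℂ) : ((E → ℝ) × (E → ℝ)) → ℂ :=
  fun p => fderiv ℝ G p (Pi.single j 1, 0)

/-- Partial derivative in the `j`-th `ζ`-coordinate. -/
noncomputable def pdZeta {E : Type*} [Fintype E] [DecidableEq E] (j : E)
    (G : ((E → ℝ) × (E → ℝ)) → ℂ) : ((E → ℝ) × (E → ℝ)) → ℂ :=
  fun p => fderiv ℝ G p (0, Pi.single j 1)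

/-- The heat operator `e^{(h/4)Δ_j}`:
`(e^{(h/4)Δ_j}F)(z, ζ) = (πh)^{−1} ∫_{ℝ²} F(z + u e_j, ζ + v e_j) e^{−(u²+v²)/h} du dv`. -/
noncomputable def heatOp {E : Type*} [Fintype E] [DecidableEq E] (h : ℝ) (j : E)
    (F : ((E → ℝ) × (E → ℝ)) → ℂ) : ((E → ℝ) × (E → ℝ)) → ℂ :=
  fun p => (((Real.pi * h)⁻¹ : ℝ) : ℂ) *
    ∫ w : ℝ × ℝ,
      F (p.1 + w.1 • (Pi.single j 1 : E → ℝ), p.2 + w.2 • (Pi.single j 1 : E → ℝ)) *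
        Complex.exp (-(((w.1 ^ 2 + w.2 ^ 2) : ℝ) : ℂ) / h)

/-- `T_h(S)`, the composition over `j ∈ S` of the operators `I − e^{(h/4)Δ_j}`. -/
noncomputable def THeat {E : Type*} [Fintype E] [DecidableEq E] (h : ℝ) (S : Finset E)
    (F : ((E → ℝ) × (E → ℝ)) → ℂ) : ((E → ℝ) × (E → ℝ)) → ℂ :=
  S.toList.foldr (fun j G => G - heatOp h j G) F

section Gaussian

theorem integrable_abs_mul_exp_neg_mul_sq {b : ℝ} (hb : 0 < b) :
    Integrable fun x : ℝ => |x| * rexp (-b * x ^ 2) :=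
  (integrable_mul_exp_neg_mul_sq hb).abs.congr <| .of_forall fun x => by
    simp [abs_mul, abs_of_pos (exp_pos _)]

open Filter Topology in
theorem integral_abs_mul_exp_neg_mul_sq {b : ℝ} (hb : 0 < b) :
    ∫ x : ℝ, |x| * rexp (-b * x ^ 2) = b⁻¹ := by
  have hderiv : ∀ x : ℝ, HasDerivAt (fun x => -(2 * b)⁻¹ * rexp (-b * x ^ 2))
      (x * rexp (-b * x ^ 2)) x := fun x => by
    refine (((hasDerivAt_pow 2 x).const_mul (-b)).exp.const_mul (-(2 * b)⁻¹)).congr_deriv ?_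
    field_simp
    ring
  have hlim : Tendsto (fun x : ℝ => -(2 * b)⁻¹ * rexp (-b * x ^ 2)) atTop (𝓝 (-(2 * b)⁻¹ * 0)) :=
    (tendsto_exp_atBot.comp ((tendsto_pow_atTop two_ne_zero).const_mul_atTop_of_neg
      (neg_lt_zero.2 hb))).const_mul _
  have hhalf := integral_Ioi_of_hasDerivAt_of_tendsto' (a := 0) (fun x _ => hderiv x)
    (integrable_mul_exp_neg_mul_sq hb).integrableOn hlim
  have hsym := integral_comp_abs (f := fun x => x * rexp (-b * x ^ 2))
  simp only [sq_abs] at hsym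
  rw [hsym, hhalf]
  norm_num
  field_simp

/-- The Gaussian kernel of `e^{(h/4)Δ_j}`, before normalisation by `(πh)⁻¹`. -/
noncomputable def gaussKernel (h : ℝ) (w : ℝ × ℝ) : ℝ :=
  rexp (-(w.1 ^ 2 + w.2 ^ 2) / h)

variable {h : ℝ}

theorem gaussKernel_eq_mul (w : ℝ × ℝ) :
    gaussKernel h w = rexp (-h⁻¹ * w.1 ^ 2) * rexp (-h⁻¹ * w.2 ^ 2) := by
  rw [gaussKernel, ← exp_add]
  ring_nf

theorem gaussKernel_pos (w : ℝ × ℝ) : 0 < gaussKernel h w := exp_pos _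

@[fun_prop]
theorem continuous_gaussKernel : Continuous (gaussKernel h) := by
  unfold gaussKernel; fun_prop

theorem integrable_gaussKernel (hh : 0 < h) : Integrable (gaussKernel h) := by
  have hg := integrable_exp_neg_mul_sq (inv_pos.2 hh)
  rw [funext gaussKernel_eq_mul, Measure.volume_eq_prod]
  exact hg.mul_prod hg

theorem integral_gaussKernel (hh : 0 < h) : ∫ w, gaussKernel h w = π * h := by
  simp_rw [gaussKernel_eq_mul, Measure.volume_eq_prod]
  rw [integral_prod_mul (fun x => rexp (-h⁻¹ * x ^ 2)) (fun x => rexp (-h⁻¹ * x ^ 2)),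
    integral_gaussian, mul_self_sqrt (by positivity), div_inv_eq_mul]

theorem integrable_abs_add_abs_mul_gaussKernel (hh : 0 < h) :
    Integrable fun w : ℝ × ℝ => (|w.1| + |w.2|) * gaussKernel h w := by
  have hg := integrable_exp_neg_mul_sq (inv_pos.2 hh)
  have ha := integrable_abs_mul_exp_neg_mul_sq (inv_pos.2 hh)
  have := (ha.mul_prod hg).add (hg.mul_prod ha)
  rw [← Measure.volume_eq_prod] at this
  refine this.congr (.of_forall fun w => ?_)
  simp only [Pi.add_apply, gaussKernel_eq_mul]
  ring

theorem integral_abs_add_abs_mul_gaussKernel (hh : 0 < h) :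
    ∫ w : ℝ × ℝ, (|w.1| + |w.2|) * gaussKernel h w = 2 * h * √(π * h) := by
  have hg := integrable_exp_neg_mul_sq (inv_pos.2 hh)
  have ha := integrable_abs_mul_exp_neg_mul_sq (inv_pos.2 hh)
  have hsplit : ∀ w : ℝ × ℝ, (|w.1| + |w.2|) * gaussKernel h w =
      |w.1| * rexp (-h⁻¹ * w.1 ^ 2) * rexp (-h⁻¹ * w.2 ^ 2) +
        rexp (-h⁻¹ * w.1 ^ 2) * (|w.2| * rexp (-h⁻¹ * w.2 ^ 2)) := fun w => by
    rw [gaussKernel_eq_mul]; ring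
  simp_rw [hsplit, Measure.volume_eq_prod]
  rw [integral_add (ha.mul_prod hg) (hg.mul_prod ha),
    integral_prod_mul (fun x => |x| * rexp (-h⁻¹ * x ^ 2)) (fun x => rexp (-h⁻¹ * x ^ 2)),
    integral_prod_mul (fun x => rexp (-h⁻¹ * x ^ 2)) (fun x => |x| * rexp (-h⁻¹ * x ^ 2)),
    integral_gaussian, integral_abs_mul_exp_neg_mul_sq (inv_pos.2 hh), div_inv_eq_mul, inv_inv]
  ring

end Gaussian

section LineDeriv

variable {X Y : Type*} [NormedAddCommGroup X] [NormedSpace ℝ X] [NormedAddCommGroup Y]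
  [NormedSpace ℝ Y] {G : X → Y} {Gv : X → Y} {v : X}

theorem hasDerivAt_comp_add_smul_of_forall_hasLineDerivAt
    (hd : ∀ q, HasLineDerivAt ℝ G (Gv q) q v) (p : X) (t : ℝ) :
    HasDerivAt (fun s : ℝ => G (p + s • v)) (Gv (p + t • v)) t := by
  have hline : HasDerivAt (fun s : ℝ => G (p + t • v + s • v)) (Gv (p + t • v)) (t - t) := by
    rw [sub_self]; exact hd (p + t • v)
  convert hline.comp_sub_const t t using 2 with s
  rw [add_assoc, ← add_smul, add_sub_cancel]

theorem norm_sub_le_of_forall_hasLineDerivAt (hd : ∀ q, HasLineDerivAt ℝ G (Gv q) q v)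
    {B : ℝ} (hB : ∀ q, ‖Gv q‖ ≤ B) (p : X) (r : ℝ) : ‖G (p + r • v) - G p‖ ≤ B * |r| := by
  have := convex_univ.norm_image_sub_le_of_norm_hasDerivWithin_le
    (fun t _ => (hasDerivAt_comp_add_smul_of_forall_hasLineDerivAt hd p t).hasDerivWithinAt)
    (fun t _ => hB _) (Set.mem_univ 0) (Set.mem_univ r)
  simpa using this

theorem fderiv_apply_eq_of_forall_hasLineDerivAt (hG : Differentiable ℝ G)
    (hd : ∀ q, HasLineDerivAt ℝ G (Gv q) q v) : (fun p => fderiv ℝ G p v) = Gv :=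
  funext fun p => ((hG p).hasFDerivAt.hasLineDerivAt v).unique (hd p)

end LineDeriv

structure IsBddContinuous {X : Type*} [TopologicalSpace X] (G : X → ℂ) : Prop where
  continuous : Continuous G
  exists_bound : ∃ C, ∀ p, ‖G p‖ ≤ C

theorem IsBddContinuous.sub {X : Type*} [TopologicalSpace X] {G₁ G₂ : X → ℂ}
    (h₁ : IsBddContinuous G₁) (h₂ : IsBddContinuous G₂) : IsBddContinuous (G₁ - G₂) := by
  obtain ⟨C₁, hC₁⟩ := h₁.exists_bound
  obtain ⟨C₂, hC₂⟩ := h₂.exists_bound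
  exact ⟨h₁.continuous.sub h₂.continuous, C₁ + C₂, fun p =>
    (norm_sub_le _ _).trans (add_le_add (hC₁ p) (hC₂ p))⟩

section HeatOperator

variable {E : Type*} [DecidableEq E] {h : ℝ} {G : (E → ℝ) × (E → ℝ) → ℂ}

def heatShift (j : E) (w : ℝ × ℝ) : (E → ℝ) × (E → ℝ) :=
  w.1 • (Pi.single j 1, 0) + w.2 • (0, Pi.single j 1)

@[fun_prop]
theorem continuous_heatShift (j : E) : Continuous (heatShift j) := by
  unfold heatShift; fun_prop

theorem integrable_heatIntegrand (hh : 0 < h) (j : E) (hG : Continuous G) {C : ℝ}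
    (hC : ∀ p, ‖G p‖ ≤ C) (p : (E → ℝ) × (E → ℝ)) :
    Integrable fun w => G (p + heatShift j w) * (gaussKernel h w : ℂ) :=
  (integrable_gaussKernel hh).ofReal.bdd_mul (by fun_prop : Continuous _).aestronglyMeasurable
    (.of_forall fun _ => hC _)

variable [Fintype E]

theorem heatOp_apply (j : E) (G : (E → ℝ) × (E → ℝ) → ℂ) (p : (E → ℝ) × (E → ℝ)) :
    heatOp h j G p =
      (((π * h)⁻¹ : ℝ) : ℂ) * ∫ w : ℝ × ℝ, G (p + heatShift j w) * (gaussKernel h w : ℂ) := by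
  have hshift : ∀ w : ℝ × ℝ, (p.1 + w.1 • (Pi.single j 1 : E → ℝ),
      p.2 + w.2 • (Pi.single j 1 : E → ℝ)) = p + heatShift j w := fun w => by
    ext <;> simp [heatShift]
  have hkernel : ∀ w : ℝ × ℝ, Complex.exp (-(((w.1 ^ 2 + w.2 ^ 2) : ℝ) : ℂ) / h) =
      (gaussKernel h w : ℂ) := fun w => by
    rw [gaussKernel, Complex.ofReal_exp]; push_cast; ring_nf
  simp only [heatOp, hshift, hkernel]

theorem norm_gaussKernel (w : ℝ × ℝ) : ‖(gaussKernel h w : ℂ)‖ = gaussKernel h w := by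
  rw [Complex.norm_real, norm_of_nonneg (gaussKernel_pos w).le]

theorem norm_integral_mul_gaussKernel_le {f : ℝ × ℝ → ℂ} {φ : ℝ × ℝ → ℝ}
    (hφ : Integrable fun w => φ w * gaussKernel h w) (hf : ∀ w, ‖f w‖ ≤ φ w) :
    ‖∫ w, f w * (gaussKernel h w : ℂ)‖ ≤ ∫ w, φ w * gaussKernel h w :=
  norm_integral_le_of_norm_le hφ <| .of_forall fun w => by
    rw [norm_mul, norm_gaussKernel]
    exact mul_le_mul_of_nonneg_right (hf w) (gaussKernel_pos w).le

theorem norm_heatOp_le (hh : 0 < h) (j : E) {C : ℝ} (hC : ∀ p, ‖G p‖ ≤ C)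
    (p : (E → ℝ) × (E → ℝ)) : ‖heatOp h j G p‖ ≤ C := by
  have hint := norm_integral_mul_gaussKernel_le
    ((integrable_gaussKernel hh).const_mul C) (fun w => hC (p + heatShift j w))
  rw [integral_const_mul, integral_gaussKernel hh] at hint
  rw [heatOp_apply, norm_mul, Complex.norm_real, norm_of_nonneg (by positivity)]
  calc (π * h)⁻¹ * ‖∫ w, G (p + heatShift j w) * (gaussKernel h w : ℂ)‖
      ≤ (π * h)⁻¹ * (C * (π * h)) := by gcongr
    _ = C := by field_simp

theorem continuous_heatOp (hh : 0 < h) (j : E) (hG : Continuous G) {C : ℝ}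
    (hC : ∀ p, ‖G p‖ ≤ C) : Continuous (heatOp h j G) := by
  simp_rw [continuous_iff_continuousAt, funext (heatOp_apply j G)]
  refine fun p => continuousAt_const.mul <| continuousAt_of_dominated
    (bound := fun w => C * gaussKernel h w) (.of_forall fun q => ?_)
    (.of_forall fun q => .of_forall fun w => ?_) ((integrable_gaussKernel hh).const_mul C)
    (.of_forall fun w => by fun_prop)
  · exact (by fun_prop : Continuous fun w => G (q + heatShift j w) * (gaussKernel h w : ℂ))
      |>.aestronglyMeasurable
  · rw [norm_mul, norm_gaussKernel]
    exact mul_le_mul_of_nonneg_right (hC _) (gaussKernel_pos w).le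

theorem IsBddContinuous.heatOp (hh : 0 < h) (j : E) (hG : IsBddContinuous G) :
    IsBddContinuous (heatOp h j G) := by
  obtain ⟨C, hC⟩ := hG.exists_bound
  exact ⟨continuous_heatOp hh j hG.continuous hC, C, norm_heatOp_le hh j hC⟩

theorem hasLineDerivAt_heatOp (hh : 0 < h) (j : E) {Gv : (E → ℝ) × (E → ℝ) → ℂ}
    {v : (E → ℝ) × (E → ℝ)} (hG : IsBddContinuous G) (hGv : IsBddContinuous Gv)
    (hd : ∀ q, HasLineDerivAt ℝ G (Gv q) q v) (q : (E → ℝ) × (E → ℝ)) :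
    HasLineDerivAt ℝ (heatOp h j G) (heatOp h j Gv q) q v := by
  obtain ⟨C, hC⟩ := hG.exists_bound
  obtain ⟨Cv, hCv⟩ := hGv.exists_bound
  have hG' := hG.continuous
  have hGv' := hGv.continuous
  have hdiff := hasDerivAt_integral_of_dominated_loc_of_deriv_le (x₀ := (0 : ℝ)) Filter.univ_mem
    (F := fun (s : ℝ) w => G (q + s • v + heatShift j w) * (gaussKernel h w : ℂ))
    (F' := fun (s : ℝ) w => Gv (q + s • v + heatShift j w) * (gaussKernel h w : ℂ))
    (bound := fun w => Cv * gaussKernel h w)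
    (.of_forall fun s => (by fun_prop : Continuous _).aestronglyMeasurable)
    (integrable_heatIntegrand hh j hG' hC _)
    (by fun_prop : Continuous _).aestronglyMeasurable
    (.of_forall fun w s _ => by
      rw [norm_mul, norm_gaussKernel]
      exact mul_le_mul_of_nonneg_right (hCv _) (gaussKernel_pos w).le)
    ((integrable_gaussKernel hh).const_mul Cv)
    (.of_forall fun w s _ => by
      simpa only [add_right_comm q] using
        (hasDerivAt_comp_add_smul_of_forall_hasLineDerivAt hd (q + heatShift j w) s).mul_const
          (gaussKernel h w : ℂ))
  simpa only [HasLineDerivAt, heatOp_apply, zero_smul, add_zero] using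
    hdiff.2.const_mul (((π * h)⁻¹ : ℝ) : ℂ)

noncomputable def THeatList (h : ℝ) (L : List E) (G : (E → ℝ) × (E → ℝ) → ℂ) :
    (E → ℝ) × (E → ℝ) → ℂ :=
  L.foldr (fun j G => G - heatOp h j G) G

theorem THeat_eq_THeatList (S : Finset E) : THeat h S G = THeatList h S.toList G := rfl

theorem THeatList_cons (j : E) (L : List E) :
    THeatList h (j :: L) G = THeatList h L G - heatOp h j (THeatList h L G) := rfl

theorem IsBddContinuous.THeatList (hh : 0 < h) (L : List E) (hG : IsBddContinuous G) :
    IsBddContinuous (THeatList h L G) := by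
  induction L with
  | nil => exact hG
  | cons j L ih => exact ih.sub (ih.heatOp hh j)

theorem hasLineDerivAt_THeatList (hh : 0 < h) (L : List E) {Gv : (E → ℝ) × (E → ℝ) → ℂ}
    {v : (E → ℝ) × (E → ℝ)} (hG : IsBddContinuous G) (hGv : IsBddContinuous Gv)
    (hd : ∀ q, HasLineDerivAt ℝ G (Gv q) q v) (q : (E → ℝ) × (E → ℝ)) :
    HasLineDerivAt ℝ (THeatList h L G) (THeatList h L Gv q) q v := by
  induction L generalizing q with
  | nil => exact hd q
  | cons j L ih =>
    exact (ih q).sub (hasLineDerivAt_heatOp hh j (hG.THeatList hh L) (hGv.THeatList hh L) ih q)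

theorem norm_sub_heatOp_le (hh : 0 < h) (j : E) {C : ℝ} (hC : ∀ p, ‖G p‖ ≤ C)
    (p : (E → ℝ) × (E → ℝ)) : ‖G p - heatOp h j G p‖ ≤ 2 * C := by
  linarith [norm_sub_le (G p) (heatOp h j G p), hC p, norm_heatOp_le hh j hC p]

theorem sub_heatOp_eq_integral (hh : 0 < h) (j : E) (hG : Continuous G) {C : ℝ}
    (hC : ∀ p, ‖G p‖ ≤ C) (p : (E → ℝ) × (E → ℝ)) :
    G p - heatOp h j G p = (((π * h)⁻¹ : ℝ) : ℂ) *
      ∫ w, (G p - G (p + heatShift j w)) * (gaussKernel h w : ℂ) := by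
  have hconst : ∫ w, G p * (gaussKernel h w : ℂ) = G p * ((π * h : ℝ) : ℂ) := by
    rw [integral_const_mul, integral_complex_ofReal, integral_gaussKernel hh]
  have hint : Integrable fun w => G p * (gaussKernel h w : ℂ) :=
    (integrable_gaussKernel hh).ofReal.const_mul (G p)
  simp_rw [sub_mul]
  rw [integral_sub hint (integrable_heatIntegrand hh j hG hC p), hconst, heatOp_apply, mul_sub]
  congr 1
  rw [mul_left_comm, ← Complex.ofReal_mul, inv_mul_cancel₀ (by positivity), Complex.ofReal_one,
    mul_one]

theorem norm_sub_heatShift_le (j : E) {Gz Gζ : (E → ℝ) × (E → ℝ) → ℂ}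
    (hz : ∀ q, HasLineDerivAt ℝ G (Gz q) q (Pi.single j 1, 0))
    (hζ : ∀ q, HasLineDerivAt ℝ G (Gζ q) q (0, Pi.single j 1)) {B : ℝ}
    (hBz : ∀ q, ‖Gz q‖ ≤ B) (hBζ : ∀ q, ‖Gζ q‖ ≤ B) (p : (E → ℝ) × (E → ℝ)) (w : ℝ × ℝ) :
    ‖G p - G (p + heatShift j w)‖ ≤ (|w.1| + |w.2|) * B := by
  have h₁ := norm_sub_le_of_forall_hasLineDerivAt hz hBz p w.1
  have h₂ := norm_sub_le_of_forall_hasLineDerivAt hζ hBζ (p + w.1 • (Pi.single j 1, 0)) w.2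
  rw [heatShift, ← add_assoc, norm_sub_rev]
  calc _ ≤ ‖G (p + w.1 • (Pi.single j 1, 0) + w.2 • (0, Pi.single j 1)) -
          G (p + w.1 • (Pi.single j 1, 0))‖ + ‖G (p + w.1 • (Pi.single j 1, 0)) - G p‖ :=
        norm_sub_le_norm_sub_add_norm_sub _ _ _
    _ ≤ (|w.1| + |w.2|) * B := by linarith

theorem norm_sub_heatOp_le_of_hasLineDerivAt (hh : 0 < h) (j : E) (hG : IsBddContinuous G)
    {Gz Gζ : (E → ℝ) × (E → ℝ) → ℂ}
    (hz : ∀ q, HasLineDerivAt ℝ G (Gz q) q (Pi.single j 1, 0))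
    (hζ : ∀ q, HasLineDerivAt ℝ G (Gζ q) q (0, Pi.single j 1)) {B : ℝ}
    (hBz : ∀ q, ‖Gz q‖ ≤ B) (hBζ : ∀ q, ‖Gζ q‖ ≤ B) (p : (E → ℝ) × (E → ℝ)) :
    ‖G p - heatOp h j G p‖ ≤ 2 * √h * B := by
  obtain ⟨C, hC⟩ := hG.exists_bound
  have hB : 0 ≤ B := (norm_nonneg _).trans (hBz p)
  have hint := norm_integral_mul_gaussKernel_le (φ := fun w => (|w.1| + |w.2|) * B)
    (((integrable_abs_add_abs_mul_gaussKernel hh).mul_const B).congr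
      (.of_forall fun w => mul_right_comm _ _ _))
    (norm_sub_heatShift_le j hz hζ hBz hBζ p)
  simp_rw [mul_right_comm _ B] at hint
  rw [integral_mul_const, integral_abs_add_abs_mul_gaussKernel hh] at hint
  have hsqrt : √(π * h) = √π * √h := sqrt_mul pi_pos.le h
  have hπ : 1 ≤ √π := one_le_sqrt.2 (by linarith [pi_gt_three])
  rw [sub_heatOp_eq_integral hh j hG.continuous hC, norm_mul, Complex.norm_real,
    norm_of_nonneg (by positivity)]
  calc (π * h)⁻¹ * ‖∫ w, (G p - G (p + heatShift j w)) * (gaussKernel h w : ℂ)‖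
      ≤ (π * h)⁻¹ * (2 * h * √(π * h) * B) := by gcongr
    _ = 2 * √h * B / √π := by
      rw [hsqrt]
      field_simp
      rw [sq_sqrt pi_pos.le]
    _ ≤ 2 * √h * B := div_le_self (by positivity) hπ

end HeatOperator

theorem forall_not_mem_of_forall_not_mem_cons {ι : Type*} {P : ι → Prop} {j : ι} {L : List ι}
    (hL : ∀ k, k ∉ j :: L → P k) (hj : P j) (k : ι) (hk : k ∉ L) : P k := by
  rcases eq_or_ne k j with rfl | hkj
  exacts [hj, hL k (by simp [hk, hkj])]

section MultiIndex

variable {E : Type*} [DecidableEq E]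

theorem add_single_le {m : ℕ} {α : E → ℕ} {j : E} (hα : ∀ k, α k ≤ m) (hj : α j < m)
    (k : E) : (α + Pi.single j 1 : E → ℕ) k ≤ m := by
  rcases eq_or_ne k j with rfl | hkj
  · simpa using hj
  · simpa [hkj] using hα k

theorem le_of_add_single_le {m : ℕ} {α : E → ℕ} {j : E}
    (hα : ∀ k, (α + Pi.single j 1 : E → ℕ) k ≤ m) (k : E) : α k ≤ m :=
  (Nat.le_add_right _ _).trans (hα k)

theorem exists_eq_add_single {α : E → ℕ} (hα : α ≠ 0) :
    ∃ j α', α = α' + (Pi.single j 1 : E → ℕ) := by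
  obtain ⟨j, hj⟩ := Function.ne_iff.1 hα
  refine ⟨j, α - Pi.single j 1, funext fun k => ?_⟩
  rcases eq_or_ne k j with rfl | hkj
  · simp only [Pi.add_apply, Pi.sub_apply, Pi.single_eq_same]
    simp only [Pi.zero_apply] at hj
    omega
  · simp [hkj]

variable [Fintype E]

theorem sum_add_single (α : E → ℕ) (j : E) :
    ∑ k, (α + Pi.single j 1 : E → ℕ) k = ∑ k, α k + 1 := by
  simp [Finset.sum_add_distrib]

theorem induction_on_add_single {m : ℕ} {P : (E → ℕ) → (E → ℕ) → Prop} (h0 : P 0 0)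
    (hfst : ∀ α β j, (∀ k, (α + Pi.single j 1 : E → ℕ) k ≤ m) → (∀ k, β k ≤ m) →
      P α β → P (α + Pi.single j 1) β)
    (hsnd : ∀ α β j, (∀ k, α k ≤ m) → (∀ k, (β + Pi.single j 1 : E → ℕ) k ≤ m) →
      P α β → P α (β + Pi.single j 1))
    (α β : E → ℕ) (hα : ∀ k, α k ≤ m) (hβ : ∀ k, β k ≤ m) : P α β := by
  induction hn : ∑ k, α k + ∑ k, β k generalizing α β with
  | zero =>
    have hα0 : α = 0 := funext fun k => Finset.sum_eq_zero_iff.1 (by omega) k (Finset.mem_univ k)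
    have hβ0 : β = 0 := funext fun k => Finset.sum_eq_zero_iff.1 (by omega) k (Finset.mem_univ k)
    rwa [hα0, hβ0]
  | succ n ih =>
    by_cases hα0 : α = 0
    · subst hα0
      obtain ⟨j, β, rfl⟩ := exists_eq_add_single (α := β) (by rintro rfl; simp at hn)
      rw [sum_add_single] at hn
      exact hsnd 0 β j hα hβ (ih 0 β hα (le_of_add_single_le hβ) (by omega))
    · obtain ⟨j, α, rfl⟩ := exists_eq_add_single hα0
      rw [sum_add_single] at hn
      exact hfst α β j hα hβ (ih α β (le_of_add_single_le hα) hβ (by omega))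

end MultiIndex

section PartialDerivFamily

variable {E : Type*} [Fintype E] [DecidableEq E] {h : ℝ} {m : ℕ}
  {D : (E → ℕ) → (E → ℕ) → (E → ℝ) × (E → ℝ) → ℂ}

/-- `D α β` plays the role of `∂_z^α ∂_ζ^β (D 0 0)` for `(α, β) ∈ I_m(E)`. -/
structure IsPartialDerivFamily (m : ℕ) (D : (E → ℕ) → (E → ℕ) → (E → ℝ) × (E → ℝ) → ℂ) :
    Prop where
  isBddContinuous : ∀ α β, (∀ k, α k ≤ m) → (∀ k, β k ≤ m) → IsBddContinuous (D α β)
  hasLineDerivAt_fst : ∀ α β j, (∀ k, (α + Pi.single j 1 : E → ℕ) k ≤ m) → (∀ k, β k ≤ m) →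
    ∀ q, HasLineDerivAt ℝ (D α β) (D (α + Pi.single j 1) β q) q (Pi.single j 1, 0)
  hasLineDerivAt_snd : ∀ α β j, (∀ k, α k ≤ m) → (∀ k, (β + Pi.single j 1 : E → ℕ) k ≤ m) →
    ∀ q, HasLineDerivAt ℝ (D α β) (D α (β + Pi.single j 1) q) q (0, Pi.single j 1)

theorem IsPartialDerivFamily.of_pdZ_of_pdZeta
    (hz : ∀ α β j, (∀ k, (α + Pi.single j 1 : E → ℕ) k ≤ m) → (∀ k, β k ≤ m) →
      Differentiable ℝ (D α β) ∧ D (α + Pi.single j 1) β = pdZ j (D α β))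
    (hζ : ∀ α β j, (∀ k, α k ≤ m) → (∀ k, (β + Pi.single j 1 : E → ℕ) k ≤ m) →
      Differentiable ℝ (D α β) ∧ D α (β + Pi.single j 1) = pdZeta j (D α β))
    (hcont : ∀ α β, (∀ k, α k ≤ m) → (∀ k, β k ≤ m) → Continuous (D α β))
    (hbdd : ∀ α β, (∀ k, α k ≤ m) → (∀ k, β k ≤ m) → ∃ C, ∀ p, ‖D α β p‖ ≤ C) :
    IsPartialDerivFamily m D where
  isBddContinuous α β hα hβ := ⟨hcont α β hα hβ, hbdd α β hα hβ⟩
  hasLineDerivAt_fst α β j hα hβ q := by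
    rw [(hz α β j hα hβ).2]
    exact ((hz α β j hα hβ).1 q).hasFDerivAt.hasLineDerivAt _
  hasLineDerivAt_snd α β j hα hβ q := by
    rw [(hζ α β j hα hβ).2]
    exact ((hζ α β j hα hβ).1 q).hasFDerivAt.hasLineDerivAt _

theorem IsPartialDerivFamily.eq_THeat (hD : IsPartialDerivFamily m D) (hh : 0 < h)
    (S : Finset E) {D' : (E → ℕ) → (E → ℕ) → (E → ℝ) × (E → ℝ) → ℂ}
    (h00 : D' 0 0 = THeat h S (D 0 0))
    (hz : ∀ α β j, (∀ k, (α + Pi.single j 1 : E → ℕ) k ≤ m) → (∀ k, β k ≤ m) →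
      Differentiable ℝ (D' α β) ∧ D' (α + Pi.single j 1) β = pdZ j (D' α β))
    (hζ : ∀ α β j, (∀ k, α k ≤ m) → (∀ k, (β + Pi.single j 1 : E → ℕ) k ≤ m) →
      Differentiable ℝ (D' α β) ∧ D' α (β + Pi.single j 1) = pdZeta j (D' α β))
    (α β : E → ℕ) (hα : ∀ k, α k ≤ m) (hβ : ∀ k, β k ≤ m) :
    D' α β = THeat h S (D α β) := by
  refine induction_on_add_single (P := fun α β => D' α β = THeat h S (D α β)) h00
    (fun α β j hα hβ ih => ?_) (fun α β j hα hβ ih => ?_) α β hα hβ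
  · obtain ⟨hdiff, heq⟩ := hz α β j hα hβ
    rw [ih] at hdiff
    rw [heq, ih]
    exact fderiv_apply_eq_of_forall_hasLineDerivAt hdiff <| hasLineDerivAt_THeatList hh _
      (hD.isBddContinuous α β (le_of_add_single_le hα) hβ) (hD.isBddContinuous _ β hα hβ)
      (hD.hasLineDerivAt_fst α β j hα hβ)
  · obtain ⟨hdiff, heq⟩ := hζ α β j hα hβ
    rw [ih] at hdiff
    rw [heq, ih]
    exact fderiv_apply_eq_of_forall_hasLineDerivAt hdiff <| hasLineDerivAt_THeatList hh _
      (hD.isBddContinuous α β hα (le_of_add_single_le hβ)) (hD.isBddContinuous α _ hα hβ)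
      (hD.hasLineDerivAt_snd α β j hα hβ)

theorem IsPartialDerivFamily.norm_THeatList_le (hD : IsPartialDerivFamily m D) (hm : 1 ≤ m)
    (hh : 0 < h) {M : ℝ}
    (hM : ∀ α β, (∀ k, α k ≤ m) → (∀ k, β k ≤ m) → (∀ k, 1 ≤ α k + β k) →
      ∀ q, √h ^ (∑ k, α k + ∑ k, β k) * ‖D α β q‖ ≤ M)
    (L : List E) (α β : E → ℕ) (hα : ∀ k, α k ≤ m) (hβ : ∀ k, β k ≤ m)
    (hL : ∀ k, k ∉ L → 1 ≤ α k + β k) (q : (E → ℝ) × (E → ℝ)) :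
    ‖THeatList h L (D α β) q‖ ≤ 2 ^ L.length * M / √h ^ (∑ k, α k + ∑ k, β k) := by
  have hs : 0 < √h := sqrt_pos.2 hh
  induction L generalizing α β q with
  | nil =>
    rw [List.length_nil, pow_zero, one_mul, le_div_iff₀ (by positivity), mul_comm]
    exact hM α β hα hβ (fun k => hL k List.not_mem_nil) q
  | cons j L ih =>
    rw [THeatList_cons, Pi.sub_apply, List.length_cons, pow_succ]
    have hG := (hD.isBddContinuous α β hα hβ).THeatList hh L
    by_cases hj : 1 ≤ α j + β j
    · exact (norm_sub_heatOp_le hh j (ih α β hα hβ (forall_not_mem_of_forall_not_mem_cons hL hj))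
        q).trans_eq (by ring)
    · have hα' := add_single_le hα (by omega : α j < m)
      have hβ' := add_single_le hβ (by omega : β j < m)
      have hLα := forall_not_mem_of_forall_not_mem_cons
        (P := fun k => 1 ≤ (α + Pi.single j 1 : E → ℕ) k + β k)
        (fun k hk => (hL k hk).trans (by simp)) (by simp; omega)
      have hLβ := forall_not_mem_of_forall_not_mem_cons
        (P := fun k => 1 ≤ α k + (β + Pi.single j 1 : E → ℕ) k)
        (fun k hk => (hL k hk).trans (by simp)) (by simp; omega)
      refine (norm_sub_heatOp_le_of_hasLineDerivAt hh j hG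
        (hasLineDerivAt_THeatList hh L (hD.isBddContinuous α β hα hβ)
          (hD.isBddContinuous _ β hα' hβ) (hD.hasLineDerivAt_fst α β j hα' hβ))
        (hasLineDerivAt_THeatList hh L (hD.isBddContinuous α β hα hβ)
          (hD.isBddContinuous α _ hα hβ') (hD.hasLineDerivAt_snd α β j hα hβ'))
        (fun q => (ih _ β hα' hβ hLα q).trans_eq (by rw [sum_add_single, add_right_comm]))
        (fun q => (ih α _ hα hβ' hLβ q).trans_eq (by rw [sum_add_single, ← add_assoc]))
        q).trans_eq ?_
      rw [pow_succ]
      field_simp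

end PartialDerivFamily

theorem weighted_norm_le_iSup {E : Type*} [Fintype E] (h : ℝ)
    (D : (E → ℕ) → (E → ℕ) → ((E → ℝ) × (E → ℝ)) → ℂ)
    (hDbdd : ∀ (α β : E → ℕ), (∀ k, α k ≤ 2) → (∀ k, β k ≤ 2) →
      ∃ C, ∀ p, ‖D α β p‖ ≤ C)
    (α β : E → ℕ) (hα : ∀ k, α k ≤ 2) (hβ : ∀ k, β k ≤ 2) (hαβ : ∀ k, 1 ≤ α k + β k)
    (q : (E → ℝ) × (E → ℝ)) :
    √h ^ (∑ k, α k + ∑ k, β k) * ‖D α β q‖ ≤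
      ⨆ ab : {ab : (E → Fin 3) × (E → Fin 3) // ∀ j, 1 ≤ (ab.1 j : ℕ) + (ab.2 j : ℕ)},
        √h ^ ((∑ j, (ab.1.1 j : ℕ)) + ∑ j, (ab.1.2 j : ℕ)) *
          ⨆ q, ‖D (fun j => (ab.1.1 j : ℕ)) (fun j => (ab.1.2 j : ℕ)) q‖ := by
  obtain ⟨C, hC⟩ := hDbdd α β hα hβ
  let ab : {ab : (E → Fin 3) × (E → Fin 3) // ∀ j, 1 ≤ (ab.1 j : ℕ) + (ab.2 j : ℕ)} :=
    ⟨(fun k => ⟨α k, by have := hα k; omega⟩, fun k => ⟨β k, by have := hβ k; omega⟩), hαβ⟩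
  refine le_trans ?_ (le_ciSup (Set.finite_range _).bddAbove ab)
  gcongr
  exact le_ciSup (f := fun q => ‖D α β q‖) ⟨C, Set.forall_mem_range.2 hC⟩ q

theorem THeat_derivative_bound_general
    (E : Type*) [Fintype E] [DecidableEq E] (h : ℝ) (hh0 : 0 < h)
    (F : ((E → ℝ) × (E → ℝ)) → ℂ)
    (D : (E → ℕ) → (E → ℕ) → ((E → ℝ) × (E → ℝ)) → ℂ)
    (hD00 : D 0 0 = F)
    (hDz : ∀ (α β : E → ℕ) (j : E),
      (∀ k, (α + Pi.single j 1 : E → ℕ) k ≤ 2) → (∀ k, β k ≤ 2) →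
      Differentiable ℝ (D α β) ∧ D (α + Pi.single j 1) β = pdZ j (D α β))
    (hDzeta : ∀ (α β : E → ℕ) (j : E),
      (∀ k, α k ≤ 2) → (∀ k, (β + Pi.single j 1 : E → ℕ) k ≤ 2) →
      Differentiable ℝ (D α β) ∧ D α (β + Pi.single j 1) = pdZeta j (D α β))
    (hDcont : ∀ (α β : E → ℕ), (∀ k, α k ≤ 2) → (∀ k, β k ≤ 2) →
      Continuous (D α β))
    (hDbdd : ∀ (α β : E → ℕ), (∀ k, α k ≤ 2) → (∀ k, β k ≤ 2) →
      ∃ C, ∀ p, ‖D α β p‖ ≤ C)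
    -- `D'` encodes the partial derivatives of `T_h(E) F`
    (D' : (E → ℕ) → (E → ℕ) → ((E → ℝ) × (E → ℝ)) → ℂ)
    (hD'00 : D' 0 0 = THeat h Finset.univ F)
    (hD'z : ∀ (α β : E → ℕ) (j : E),
      (∀ k, (α + Pi.single j 1 : E → ℕ) k ≤ 2) → (∀ k, β k ≤ 2) →
      Differentiable ℝ (D' α β) ∧ D' (α + Pi.single j 1) β = pdZ j (D' α β))
    (hD'zeta : ∀ (α β : E → ℕ) (j : E),
      (∀ k, α k ≤ 2) → (∀ k, (β + Pi.single j 1 : E → ℕ) k ≤ 2) →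
      Differentiable ℝ (D' α β) ∧ D' α (β + Pi.single j 1) = pdZeta j (D' α β)) :
    ∀ (αβ : (E → Fin 3) × (E → Fin 3)) (p : (E → ℝ) × (E → ℝ)),
      Real.sqrt h ^ ((∑ j, (αβ.1 j : ℕ)) + ∑ j, (αβ.2 j : ℕ)) *
          ‖D' (fun j => (αβ.1 j : ℕ)) (fun j => (αβ.2 j : ℕ)) p‖ ≤
        2 ^ Fintype.card E *
          ⨆ ab : {ab : (E → Fin 3) × (E → Fin 3) //
              ∀ j, 1 ≤ (ab.1 j : ℕ) + (ab.2 j : ℕ)},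
            Real.sqrt h ^ ((∑ j, (ab.1.1 j : ℕ)) + ∑ j, (ab.1.2 j : ℕ)) *
              ⨆ q, ‖D (fun j => (ab.1.1 j : ℕ)) (fun j => (ab.1.2 j : ℕ)) q‖ := by
  intro αβ p
  have hD := IsPartialDerivFamily.of_pdZ_of_pdZeta hDz hDzeta hDcont hDbdd
  have hα : ∀ k, (αβ.1 k : ℕ) ≤ 2 := fun k => Nat.le_of_lt_succ (αβ.1 k).isLt
  have hβ : ∀ k, (αβ.2 k : ℕ) ≤ 2 := fun k => Nat.le_of_lt_succ (αβ.2 k).isLt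
  rw [hD.eq_THeat hh0 Finset.univ (hD00 ▸ hD'00) hD'z hD'zeta _ _ hα hβ, THeat_eq_THeatList,
    ← le_div_iff₀' (by positivity)]
  have hbound := hD.norm_THeatList_le one_le_two hh0 (weighted_norm_le_iSup h D hDbdd)
    Finset.univ.toList _ _ hα hβ (fun k hk => (hk (Finset.mem_toList.2 (Finset.mem_univ k))).elim) p
  rwa [Finset.length_toList, Finset.card_univ] at hbound

/-- **Proposition 8.4, estimate (8.6).**  Let `E` be finite, `0 < h ≤ 1`, and let
`F : ℝ^E × ℝ^E → ℂ` be bounded continuous with continuous bounded partial derivatives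
`∂_z^α ∂_ζ^β F` (encoded by `D`) for all `(α,β) ∈ I₂(E)`.  Then, `D'` denoting the
partial derivatives of `T_h(E)F`,
`sup_{(α,β)∈I₂(E)} h^{(|α|+|β|)/2} ‖∂_z^α ∂_ζ^β (T_h(E)F)‖_∞
  ≤ 2^{|E|} sup_{(α,β)∈Ĩ₂(E)} h^{(|α|+|β|)/2} ‖∂_z^α ∂_ζ^β F‖_∞`,
where `Ĩ₂(E)` consists of the `(α,β) ∈ I₂(E)` with `α_j + β_j ≥ 1` for all `j ∈ E`. -/
theorem THeat_derivative_bound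
    (E : Type*) [Fintype E] [DecidableEq E] (h : ℝ) (hh0 : 0 < h) (hh1 : h ≤ 1)
    (F : ((E → ℝ) × (E → ℝ)) → ℂ) (hFcont : Continuous F)
    (hFbdd : ∃ C, ∀ p, ‖F p‖ ≤ C)
    (D : (E → ℕ) → (E → ℕ) → ((E → ℝ) × (E → ℝ)) → ℂ)
    (hD00 : D 0 0 = F)
    (hDz : ∀ (α β : E → ℕ) (j : E),
      (∀ k, (α + Pi.single j 1 : E → ℕ) k ≤ 2) → (∀ k, β k ≤ 2) →
      Differentiable ℝ (D α β) ∧ D (α + Pi.single j 1) β = pdZ j (D α β))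
    (hDzeta : ∀ (α β : E → ℕ) (j : E),
      (∀ k, α k ≤ 2) → (∀ k, (β + Pi.single j 1 : E → ℕ) k ≤ 2) →
      Differentiable ℝ (D α β) ∧ D α (β + Pi.single j 1) = pdZeta j (D α β))
    (hDcont : ∀ (α β : E → ℕ), (∀ k, α k ≤ 2) → (∀ k, β k ≤ 2) →
      Continuous (D α β))
    (hDbdd : ∀ (α β : E → ℕ), (∀ k, α k ≤ 2) → (∀ k, β k ≤ 2) →
      ∃ C, ∀ p, ‖D α β p‖ ≤ C)
    -- `D'` encodes the partial derivatives of `T_h(E) F`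
    (D' : (E → ℕ) → (E → ℕ) → ((E → ℝ) × (E → ℝ)) → ℂ)
    (hD'00 : D' 0 0 = THeat h Finset.univ F)
    (hD'z : ∀ (α β : E → ℕ) (j : E),
      (∀ k, (α + Pi.single j 1 : E → ℕ) k ≤ 2) → (∀ k, β k ≤ 2) →
      Differentiable ℝ (D' α β) ∧ D' (α + Pi.single j 1) β = pdZ j (D' α β))
    (hD'zeta : ∀ (α β : E → ℕ) (j : E),
      (∀ k, α k ≤ 2) → (∀ k, (β + Pi.single j 1 : E → ℕ) k ≤ 2) →
      Differentiable ℝ (D' α β) ∧ D' α (β + Pi.single j 1) = pdZeta j (D' α β)) :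
    ∀ (αβ : (E → Fin 3) × (E → Fin 3)) (p : (E → ℝ) × (E → ℝ)),
      Real.sqrt h ^ ((∑ j, (αβ.1 j : ℕ)) + ∑ j, (αβ.2 j : ℕ)) *
          ‖D' (fun j => (αβ.1 j : ℕ)) (fun j => (αβ.2 j : ℕ)) p‖ ≤
        2 ^ Fintype.card E *
          ⨆ ab : {ab : (E → Fin 3) × (E → Fin 3) //
              ∀ j, 1 ≤ (ab.1 j : ℕ) + (ab.2 j : ℕ)},
            Real.sqrt h ^ ((∑ j, (ab.1.1 j : ℕ)) + ∑ j, (ab.1.2 j : ℕ)) *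
              ⨆ q, ‖D (fun j => (ab.1.1 j : ℕ)) (fun j => (ab.1.2 j : ℕ)) q‖ :=
  THeat_derivative_bound_general E h hh0 F D hD00 hDz hDzeta hDcont hDbdd D' hD'00 hD'z hD'zeta
end
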